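/- (Local optimality of chains contained in a minimum-weight basis of a profit class) Fix a profit value q and let P = {i ∈ [n] : p_i = q}. Let P_I ⊆ P be an inclusionwise maximal independent subset of P of minimum total weight, i.e., P_I is independent, there is no independent S with P_I ⊊ S ⊆ P, and ∑_{i ∈ P_I} w_i ≤ ∑_{i ∈ B} w_i for every inclusionwise maximal independent B ⊆ P. Then for every independent chain 𝒮 = (S_1, …, S_T) with S_T ⊆ P, there exists an independent chain 𝒮' = (S'_1, …, S'_T) with S'_T ⊆ P_I such that γ(S'_t) = γ(S_t) and ∑_{i ∈ S'_t} w_i ≤ ∑_{i ∈ S_t} w_i for every t ∈ [T]. -/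

import Mathlib

/-!
Within one profit class every independent set has profit `q` per element, so submodularity and
the all-or-nothing property give the matroid augmentation axiom for the independent subsets of
`P`, and `P_I` is a minimum-weight basis of that matroid. Order `P_I` greedily by weight and let
`S'_t` be its `|S_t|` lightest elements. These prefixes form a chain of independent sets, and
`γ(S'_t) = q |S'_t| = q |S_t| = γ(S_t)`. Finally, the `k` lightest elements of a minimum-weight
basis weigh no more than any independent `k`-set `A`: augmenting the greedy `(k-1)`-prefix by an
element `x ∈ A` and completing it from `P_I` yields a basis `P_I - y + x`, so minimality forces some
not yet chosen `y ∈ P_I` with `w y ≤ w x`, and the next greedy element is lighter still.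
-/

open Finset

/-- A set `S` is independent if `γ S = ∑ i ∈ S, p i`. -/
def AoNIndep {n : ℕ} (γ : Finset (Fin n) → ℕ) (p : Fin n → ℕ) (S : Finset (Fin n)) : Prop :=
  γ S = ∑ i ∈ S, p i

def AllOrNothing {n : ℕ} (γ : Finset (Fin n) → ℕ) (p : Fin n → ℕ) : Prop :=
  ∀ (i : Fin n) (S : Finset (Fin n)), γ (insert i S) = γ S ∨ γ (insert i S) = γ S + p i

section AllOrNothing

variable {n : ℕ} {γ : Finset (Fin n) → ℕ} {p : Fin n → ℕ}

theorem AllOrNothing.union_le (haon : AllOrNothing γ p) (A B : Finset (Fin n)) :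
    γ (A ∪ B) ≤ γ A + ∑ i ∈ B, p i := by
  induction B using Finset.induction_on with
  | empty => simp
  | @insert a B ha ih =>
    rw [union_insert, sum_insert ha]
    rcases haon a (A ∪ B) with h | h <;> omega

theorem AoNIndep.subset (hγ0 : γ ∅ = 0) (haon : AllOrNothing γ p) {S S' : Finset (Fin n)}
    (hS : AoNIndep γ p S) (hS' : S' ⊆ S) : AoNIndep γ p S' := by
  have hle : γ S' ≤ ∑ i ∈ S', p i := by simpa [hγ0] using haon.union_le ∅ S'
  have hge : γ S ≤ γ S' + ∑ i ∈ S \ S', p i := by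
    simpa [union_sdiff_of_subset hS'] using haon.union_le S' (S \ S')
  have hsplit := sum_sdiff (f := p) hS'
  unfold AoNIndep at hS ⊢
  omega

theorem AoNIndep.eq_card_mul {q : ℕ} {P S : Finset (Fin n)} (hPq : ∀ i ∈ P, p i = q)
    (hSP : S ⊆ P) (hS : AoNIndep γ p S) : γ S = #S * q :=
  hS.trans (sum_const_nat fun i hi => hPq i (hSP hi))

theorem gamma_union_eq_of_forall_insert_eq
    (hmono : Monotone γ)
    (hsub : ∀ S T : Finset (Fin n), S ⊆ T → ∀ i : Fin n,
      γ (insert i S) + γ T ≥ γ (insert i T) + γ S)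
    {A D : Finset (Fin n)} (hD : ∀ i ∈ D, γ (insert i A) = γ A) :
    γ (A ∪ D) = γ A := by
  induction D using Finset.induction_on with
  | empty => simp
  | @insert a D ha ih =>
    have hAD := ih fun i hi => hD i (mem_insert_of_mem hi)
    have hsa := hsub A (A ∪ D) subset_union_left a
    have hgrow : γ A ≤ γ (insert a (A ∪ D)) := hmono (subset_union_left.trans (subset_insert _ _))
    rw [union_insert]
    have := hD a (mem_insert_self a D)
    omega

theorem AoNIndep.exists_insert_of_card_lt
    (hmono : Monotone γ)
    (hsub : ∀ S T : Finset (Fin n), S ⊆ T → ∀ i : Fin n,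
      γ (insert i S) + γ T ≥ γ (insert i T) + γ S)
    (haon : AllOrNothing γ p) {q : ℕ} {P A B : Finset (Fin n)} (hPq : ∀ i ∈ P, p i = q)
    (hAP : A ⊆ P) (hBP : B ⊆ P) (hA : AoNIndep γ p A) (hB : AoNIndep γ p B)
    (hAB : #A < #B) : ∃ x ∈ B \ A, AoNIndep γ p (insert x A) := by
  by_contra! hstuck
  -- An element of profit `0` would always extend `A`; this is what rules out `q = 0`.
  have hflat : ∀ i ∈ B \ A, γ (insert i A) = γ A ∧ p i ≠ 0 := by
    intro i hi
    have hjump : γ (insert i A) ≠ γ A + p i := fun h =>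
      hstuck i hi (by rw [AoNIndep, sum_insert (mem_sdiff.mp hi).2, h, hA, add_comm])
    rcases haon i A with h | h
    · exact ⟨h, fun h0 => hjump (by rw [h, h0, add_zero])⟩
    · exact absurd h hjump
  obtain ⟨i, hi⟩ := sdiff_nonempty_of_card_lt_card hAB
  have hq : 0 < q := Nat.pos_of_ne_zero (hPq i (hBP (mem_sdiff.mp hi).1) ▸ (hflat i hi).2)
  have hunion : γ (A ∪ B) = γ A := by
    rw [← union_sdiff_self_eq_union]
    exact gamma_union_eq_of_forall_insert_eq hmono hsub fun i hi => (hflat i hi).1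
  have hle : #B * q ≤ #A * q := by
    rw [← hA.eq_card_mul hPq hAP, ← hB.eq_card_mul hPq hBP, ← hunion]
    exact hmono subset_union_right
  exact absurd (Nat.le_of_mul_le_mul_right hle hq) (not_le.mpr hAB)

end AllOrNothing

section GreedyPrefix

variable {α β : Type*} [DecidableEq α] [LinearOrder β] (w : α → β) (B : Finset α)

/-- `greedyPrefix w B k` consists of `k` lightest elements of `B` (all of `B` once `k ≥ #B`),
chosen one at a time so that the prefixes are nested. -/
noncomputable def greedyPrefix : ℕ → Finset α
  | 0 => ∅
  | k + 1 =>
    if h : (B \ greedyPrefix k).Nonempty then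
      insert ((B \ greedyPrefix k).exists_min_image w h).choose (greedyPrefix k)
    else greedyPrefix k

theorem exists_greedyPrefix_succ {k : ℕ} (h : (B \ greedyPrefix w B k).Nonempty) :
    ∃ b ∈ B \ greedyPrefix w B k, greedyPrefix w B (k + 1) = insert b (greedyPrefix w B k) ∧
      ∀ y ∈ B \ greedyPrefix w B k, w b ≤ w y := by
  obtain ⟨hb, hmin⟩ := ((B \ greedyPrefix w B k).exists_min_image w h).choose_spec
  exact ⟨_, hb, by rw [greedyPrefix, dif_pos h], hmin⟩

theorem greedyPrefix_subset_succ (k : ℕ) : greedyPrefix w B k ⊆ greedyPrefix w B (k + 1) := by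
  by_cases h : (B \ greedyPrefix w B k).Nonempty
  · obtain ⟨b, -, hsucc, -⟩ := exists_greedyPrefix_succ w B h
    exact hsucc ▸ subset_insert b _
  · rw [greedyPrefix, dif_neg h]

theorem greedyPrefix_mono : Monotone (greedyPrefix w B) :=
  monotone_nat_of_le_succ (greedyPrefix_subset_succ w B)

theorem greedyPrefix_subset (k : ℕ) : greedyPrefix w B k ⊆ B := by
  induction k with
  | zero => exact empty_subset B
  | succ k ih =>
    by_cases h : (B \ greedyPrefix w B k).Nonempty
    · obtain ⟨b, hb, hsucc, -⟩ := exists_greedyPrefix_succ w B h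
      exact hsucc ▸ insert_subset (mem_sdiff.mp hb).1 ih
    · rwa [greedyPrefix, dif_neg h]

theorem card_greedyPrefix {k : ℕ} (hk : k ≤ #B) : #(greedyPrefix w B k) = k := by
  induction k with
  | zero => rfl
  | succ k ih =>
    have hcard := ih (by omega)
    obtain ⟨b, hb, hsucc, -⟩ :=
      exists_greedyPrefix_succ w B
        (sdiff_nonempty_of_card_lt_card (s := greedyPrefix w B k) (by omega))
    rw [hsucc, card_insert_of_notMem (mem_sdiff.mp hb).2, hcard]

end GreedyPrefix

section MinWeightBasis

variable {α β : Type*} [DecidableEq α] {I : Finset α → Prop}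

def HasAugmentation (I : Finset α → Prop) : Prop :=
  ∀ ⦃A B : Finset α⦄, I A → I B → #A < #B → ∃ x ∈ B \ A, I (insert x A)

namespace HasAugmentation

variable {M : Finset α}

theorem card_le_of_maximal (haug : HasAugmentation I) (hM : Maximal I M) {A : Finset α}
    (hA : I A) : #A ≤ #M := by
  by_contra! h
  obtain ⟨x, hx, hxI⟩ := haug hM.1 hA h
  exact (mem_sdiff.mp hx).2 (hM.2 hxI (subset_insert x M) (mem_insert_self x M))

theorem maximal_of_card_eq (haug : HasAugmentation I) (hM : Maximal I M) {B : Finset α}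
    (hB : I B) (hcard : #B = #M) : Maximal I B :=
  ⟨hB, fun _ hC hBC => (eq_of_subset_of_card_le hBC (hcard ▸ haug.card_le_of_maximal hM hC)).ge⟩

theorem exists_superset_subset_union (haug : HasAugmentation I) (hM : Maximal I M)
    {A : Finset α} (hA : I A) : ∃ B, A ⊆ B ∧ B ⊆ A ∪ M ∧ I B ∧ #B = #M := by
  classical
  obtain ⟨B, hBF, hBmax⟩ := ((A ∪ M).powerset.filter fun B => A ⊆ B ∧ I B).exists_max_image
    card ⟨A, mem_filter.mpr ⟨mem_powerset.mpr subset_union_left, subset_rfl, hA⟩⟩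
  simp only [mem_filter, mem_powerset] at hBF
  obtain ⟨hBsub, hAB, hB⟩ := hBF
  refine ⟨B, hAB, hBsub, hB, le_antisymm (haug.card_le_of_maximal hM hB) ?_⟩
  by_contra! hlt
  obtain ⟨x, hx, hxI⟩ := haug hB hM.1 hlt
  have hbig := hBmax (insert x B) (by
    simp only [mem_filter, mem_powerset]
    exact ⟨insert_subset (mem_union_right A (mem_sdiff.mp hx).1) hBsub,
      hAB.trans (subset_insert x B), hxI⟩)
  rw [card_insert_of_notMem (mem_sdiff.mp hx).2] at hbig
  omega

variable [AddCommMonoid β] [LinearOrder β] [IsOrderedCancelAddMonoid β] {w : α → β}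

theorem exists_mem_sdiff_le_of_insert (haug : HasAugmentation I) (hM : Maximal I M)
    (hmin : ∀ C, Maximal I C → ∑ i ∈ M, w i ≤ ∑ i ∈ C, w i) {B : Finset α} {x : α}
    (hBM : B ⊆ M) (hxB : x ∉ B) (hxI : I (insert x B)) : ∃ y ∈ M \ B, w y ≤ w x := by
  by_cases hxM : x ∈ M
  · exact ⟨x, mem_sdiff.mpr ⟨hxM, hxB⟩, le_rfl⟩
  obtain ⟨C, hBC, hCsub, hC, hCcard⟩ := haug.exists_superset_subset_union hM hxI
  have hxC : x ∈ C := hBC (mem_insert_self x B)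
  have hE : C.erase x ⊆ M := fun i hi => by
    have hi' := hCsub (mem_of_mem_erase hi)
    simp only [mem_union, mem_insert] at hi'
    rcases hi' with (rfl | hiB) | hiM
    · exact absurd rfl (ne_of_mem_erase hi)
    · exact hBM hiB
    · exact hiM
  have hMpos : 0 < #M := hCcard ▸ card_pos.mpr ⟨x, hxC⟩
  obtain ⟨y, hy⟩ : ∃ y, M \ C.erase x = {y} := card_eq_one.mp (by
    rw [card_sdiff_of_subset hE, card_erase_of_mem hxC, hCcard]
    omega)
  have hyM := hy ▸ mem_singleton_self y
  refine ⟨y, mem_sdiff.mpr ⟨(mem_sdiff.mp hyM).1, fun hyB => (mem_sdiff.mp hyM).2 ?_⟩, ?_⟩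
  · exact mem_erase.mpr ⟨fun hyx => hxB (hyx ▸ hyB), hBC (mem_insert_of_mem hyB)⟩
  · have hle := hmin C (haug.maximal_of_card_eq hM hC hCcard)
    rw [← sum_sdiff hE, hy, sum_singleton, ← add_sum_erase C w hxC] at hle
    exact le_of_add_le_add_right hle

theorem sum_greedyPrefix_le (haug : HasAugmentation I) (hI : ∀ ⦃A B⦄, A ⊆ B → I B → I A)
    (hM : Maximal I M) (hmin : ∀ C, Maximal I C → ∑ i ∈ M, w i ≤ ∑ i ∈ C, w i)
    {A : Finset α} (hA : I A) : ∑ i ∈ greedyPrefix w M #A, w i ≤ ∑ i ∈ A, w i := by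
  obtain ⟨k, hk⟩ : ∃ k, #A = k := ⟨_, rfl⟩
  induction k generalizing A with
  | zero => simp [card_eq_zero.mp hk, greedyPrefix]
  | succ k ih =>
    have hkM : k < #M := by have := haug.card_le_of_maximal hM hA; omega
    have hG := greedyPrefix_subset w M k
    obtain ⟨x, hx, hxI⟩ := haug (hI hG hM.1) hA (by rw [card_greedyPrefix w M hkM.le]; omega)
    obtain ⟨y, hy, hyx⟩ := haug.exists_mem_sdiff_le_of_insert hM hmin hG (mem_sdiff.mp hx).2 hxI
    obtain ⟨b, hb, hsucc, hbmin⟩ := exists_greedyPrefix_succ w M ⟨y, hy⟩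
    have hxA := (mem_sdiff.mp hx).1
    have hrest := ih (hI (erase_subset x A) hA) (by rw [card_erase_of_mem hxA, hk]; rfl)
    rw [card_erase_of_mem hxA, hk] at hrest
    calc ∑ i ∈ greedyPrefix w M #A, w i = w b + ∑ i ∈ greedyPrefix w M k, w i := by
          rw [hk, hsucc, sum_insert (mem_sdiff.mp hb).2]
      _ ≤ w x + ∑ i ∈ A.erase x, w i := add_le_add ((hbmin y hy).trans hyx) hrest
      _ = ∑ i ∈ A, w i := add_sum_erase A w hxA

end HasAugmentation

end MinWeightBasis

theorem hasAugmentation_indep_subsets {n : ℕ} {γ : Finset (Fin n) → ℕ} {p : Fin n → ℕ}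
    (hmono : Monotone γ)
    (hsub : ∀ S T : Finset (Fin n), S ⊆ T → ∀ i : Fin n,
      γ (insert i S) + γ T ≥ γ (insert i T) + γ S)
    (haon : AllOrNothing γ p) {q : ℕ} {P : Finset (Fin n)} (hPq : ∀ i ∈ P, p i = q) :
    HasAugmentation fun B => B ⊆ P ∧ AoNIndep γ p B := fun _ _ hA hB hAB => by
  obtain ⟨x, hx, hxI⟩ := hA.2.exists_insert_of_card_lt hmono hsub haon hPq hA.1 hB.1 hB.2 hAB
  exact ⟨x, hx, insert_subset (hB.1 (mem_sdiff.mp hx).1) hA.1, hxI⟩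

theorem local_optimality_in_profit_class_general {n T : ℕ} (γ : Finset (Fin n) → ℕ)
    (p w : Fin n → ℕ)
    (hγ0 : γ ∅ = 0)
    (hmono : ∀ S T : Finset (Fin n), S ⊆ T → γ S ≤ γ T)
    (hsub : ∀ S T : Finset (Fin n), S ⊆ T → ∀ i : Fin n,
      γ (insert i S) + γ T ≥ γ (insert i T) + γ S)
    (haon : ∀ (i : Fin n) (S : Finset (Fin n)),
      γ (insert i S) = γ S ∨ γ (insert i S) = γ S + p i)
    (q : ℕ) (P : Finset (Fin n)) (hP : P = Finset.univ.filter (fun i => p i = q))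
    (PI : Finset (Fin n))
    (hPIsub : PI ⊆ P)
    (hPIindep : AoNIndep γ p PI)
    (hPImax : ∀ B : Finset (Fin n), B ⊆ P → AoNIndep γ p B → PI ⊆ B → PI = B)
    (hPImin : ∀ B : Finset (Fin n), B ⊆ P → AoNIndep γ p B →
      (∀ C : Finset (Fin n), C ⊆ P → AoNIndep γ p C → B ⊆ C → B = C) →
      ∑ i ∈ PI, w i ≤ ∑ i ∈ B, w i)
    (S : Fin T → Finset (Fin n))
    (hchain : Monotone S)
    (hindep : ∀ t, AoNIndep γ p (S t))
    (hsubP : ∀ t, S t ⊆ P) :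
    ∃ S' : Fin T → Finset (Fin n),
      Monotone S' ∧
      (∀ t, S' t ⊆ PI) ∧
      (∀ t, AoNIndep γ p (S' t)) ∧
      (∀ t, γ (S' t) = γ (S t)) ∧
      (∀ t, ∑ i ∈ S' t, w i ≤ ∑ i ∈ S t, w i) := by
  let I : Finset (Fin n) → Prop := fun B => B ⊆ P ∧ AoNIndep γ p B
  have hPq : ∀ i ∈ P, p i = q := by
    subst hP
    exact fun i hi => (mem_filter.mp hi).2
  have hI : ∀ ⦃A B⦄, A ⊆ B → I B → I A := fun A B hAB hB =>
    ⟨hAB.trans hB.1, hB.2.subset hγ0 haon hAB⟩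
  have haug : HasAugmentation I :=
    hasAugmentation_indep_subsets (fun A B => hmono A B) hsub haon hPq
  have hPI : Maximal I PI := ⟨⟨hPIsub, hPIindep⟩, fun B hB hle => (hPImax B hB.1 hB.2 hle).ge⟩
  have hmin : ∀ B, Maximal I B → ∑ i ∈ PI, w i ≤ ∑ i ∈ B, w i := fun B hB =>
    hPImin B hB.1.1 hB.1.2 fun C hC hCi hBC => le_antisymm hBC (hB.2 ⟨hC, hCi⟩ hBC)
  have hS : ∀ t, I (S t) := fun t => ⟨hsubP t, hindep t⟩
  have hS' : ∀ t, greedyPrefix w PI #(S t) ⊆ PI := fun t => greedyPrefix_subset w PI _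
  refine ⟨fun t => greedyPrefix w PI #(S t),
    fun t u htu => greedyPrefix_mono w PI (card_le_card (hchain htu)), hS',
    fun t => hPIindep.subset hγ0 haon (hS' t), fun t => ?_,
    fun t => haug.sum_greedyPrefix_le hI hPI hmin (hS t)⟩
  rw [(hPIindep.subset hγ0 haon (hS' t)).eq_card_mul hPq ((hS' t).trans hPIsub),
    (hindep t).eq_card_mul hPq (hsubP t),
    card_greedyPrefix w PI (haug.card_le_of_maximal hPI (hS t))]

theorem local_optimality_in_profit_class {n T : ℕ} (γ : Finset (Fin n) → ℕ)
    (p w : Fin n → ℕ)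
    (hp : ∀ i, 1 ≤ p i)
    (hγ0 : γ ∅ = 0)
    (hmono : ∀ S T : Finset (Fin n), S ⊆ T → γ S ≤ γ T)
    (hsub : ∀ S T : Finset (Fin n), S ⊆ T → ∀ i : Fin n,
      γ (insert i S) + γ T ≥ γ (insert i T) + γ S)
    (haon : ∀ (i : Fin n) (S : Finset (Fin n)),
      γ (insert i S) = γ S ∨ γ (insert i S) = γ S + p i)
    (q : ℕ) (P : Finset (Fin n)) (hP : P = Finset.univ.filter (fun i => p i = q))
    (PI : Finset (Fin n))
    (hPIsub : PI ⊆ P)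
    (hPIindep : AoNIndep γ p PI)
    (hPImax : ∀ B : Finset (Fin n), B ⊆ P → AoNIndep γ p B → PI ⊆ B → PI = B)
    (hPImin : ∀ B : Finset (Fin n), B ⊆ P → AoNIndep γ p B →
      (∀ C : Finset (Fin n), C ⊆ P → AoNIndep γ p C → B ⊆ C → B = C) →
      ∑ i ∈ PI, w i ≤ ∑ i ∈ B, w i)
    (S : Fin T → Finset (Fin n))
    (hchain : Monotone S)
    (hindep : ∀ t, AoNIndep γ p (S t))
    (hsubP : ∀ t, S t ⊆ P) :
    ∃ S' : Fin T → Finset (Fin n),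
      Monotone S' ∧
      (∀ t, S' t ⊆ PI) ∧
      (∀ t, AoNIndep γ p (S' t)) ∧
      (∀ t, γ (S' t) = γ (S t)) ∧
      (∀ t, ∑ i ∈ S' t, w i ≤ ∑ i ∈ S t, w i) :=
  local_optimality_in_profit_class_general γ p w hγ0 hmono hsub haon q P hP PI hPIsub hPIindep
    hPImax hPImin S hchain hindep hsubP
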